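/- arXiv:2506.18395 — 2 statements merged into one kernel-verified Lean document; each statement's English description precedes it below -/
import Mathlib

section
/- For every positive integer n and every complex number s with Re(s) > 1, the Dirichlet series of Ramanujan sums satisfies ∑_{q=1}^∞ c_q(n) q^{−s} = σ_{1−s}(n) / ζ(s), where the series converges absolutely. -/
open Complex Filter

/-- The Ramanujan sum `c_q(n) = ∑_{a mod q, gcd(a,q)=1} e(na/q)`. -/
noncomputable def ramanujanSum (q n : ℕ) : ℂ :=
  ∑ a ∈ (Finset.range q).filter (fun a => Nat.Coprime a q),
    Complex.exp (2 * Real.pi * Complex.I * (((n * a : ℕ) : ℂ) / (q : ℂ)))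

/-- A smooth weight function attached to a parameter `U ≥ 2`: `0 ≤ W ≤ 1`, supported in
`[1/(2U), 1 + 1/(2U)]`, equal to `1` on `[1/U, 1]`, with `j`-th derivative `≪_j U^j`. -/
structure Weight (U : ℝ) : Type where
  toFun : ℝ → ℝ
  smooth : ContDiff ℝ (⊤ : ℕ∞) toFun
  nonneg : ∀ t, 0 ≤ toFun t
  le_one : ∀ t, toFun t ≤ 1
  support_subset : ∀ t, t ∉ Set.Icc (1 / (2 * U)) (1 + 1 / (2 * U)) → toFun t = 0
  eq_one : ∀ t ∈ Set.Icc (1 / U) 1, toFun t = 1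
  deriv_bound : ∀ j : ℕ, ∃ Cj : ℝ, ∀ t, |iteratedDeriv j toFun t| ≤ Cj * U ^ j

/-- The Mellin transform `Ŵ(s) = ∫_0^∞ W(t) t^{s-1} dt`. -/
noncomputable def mellinW (W : ℝ → ℝ) (s : ℂ) : ℂ :=
  ∫ t in Set.Ioi (0 : ℝ), (W t : ℂ) * (t : ℂ) ^ (s - 1)

/-- `(1/(2πi)) ∫_{Re s = c} f(s) ds`, the normalized vertical line integral. -/
noncomputable def VI (c : ℝ) (f : ℂ → ℂ) : ℂ :=
  (1 / (2 * Real.pi * Complex.I)) * ∫ t : ℝ, f (c + t * Complex.I) * Complex.I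

/-- The smoothed second moment `C(x,y) = ∑_n (∑_q c_q(n) W(q/x))² W(n/y)`. -/
noncomputable def Cxy {U : ℝ} (W : Weight U) (x y : ℝ) : ℂ :=
  ∑' n : ℕ+, (∑' q : ℕ+, ramanujanSum q n * (W.toFun ((q : ℕ) / x) : ℂ)) ^ 2
    * (W.toFun ((n : ℕ) / y) : ℂ)

/-- The generalized divisor sum `σ_z(n) = ∑_{d ∣ n} d^z`. -/
noncomputable def sigmaC (z : ℂ) (n : ℕ) : ℂ := ∑ d ∈ n.divisors, (d : ℂ) ^ z

open scoped LSeries.notation ArithmeticFunction ArithmeticFunction.Moebius ArithmeticFunction.zeta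

/-- Sum of `q`-th roots of unity to the `m`-th power. -/
lemma sum_exp_eq (q m : ℕ) (hq : 0 < q) :
    ∑ a ∈ Finset.range q, Complex.exp (2 * Real.pi * Complex.I * (((m * a : ℕ) : ℂ) / (q : ℂ)))
      = if q ∣ m then (q : ℂ) else 0 := by
  have hq0 : (q : ℂ) ≠ 0 := Nat.cast_ne_zero.mpr hq.ne'
  set x : ℂ := Complex.exp (2 * Real.pi * Complex.I * ((m : ℂ) / (q : ℂ))) with hx
  have hxa : ∀ a : ℕ,
      Complex.exp (2 * Real.pi * Complex.I * (((m * a : ℕ) : ℂ) / (q : ℂ))) = x ^ a := by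
    intro a
    rw [hx, ← Complex.exp_nat_mul]
    push_cast
    ring_nf
  simp_rw [hxa]
  have hxq : x ^ q = 1 := by
    rw [hx, ← Complex.exp_nat_mul]
    have : (q : ℂ) * (2 * Real.pi * Complex.I * ((m : ℂ) / (q : ℂ)))
        = (m : ℂ) * (2 * Real.pi * Complex.I) := by
      field_simp
    rw [this, Complex.exp_nat_mul_two_pi_mul_I]
  by_cases h : q ∣ m
  · obtain ⟨k, rfl⟩ := h
    have hx1 : x = 1 := by
      rw [hx]
      have : 2 * Real.pi * Complex.I * (((q * k : ℕ) : ℂ) / (q : ℂ))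
          = (k : ℂ) * (2 * Real.pi * Complex.I) := by
        push_cast; field_simp
      rw [this, Complex.exp_nat_mul_two_pi_mul_I]
    simp [hx1]
  · rw [if_neg h]
    have hx1 : x ≠ 1 := by
      intro hx1
      rw [hx, Complex.exp_eq_one_iff] at hx1
      obtain ⟨k, hk⟩ := hx1
      have h2 : (2 * Real.pi * Complex.I : ℂ) ≠ 0 := by
        simp [Real.pi_ne_zero, Complex.I_ne_zero]
      have hmq : (m : ℂ) / (q : ℂ) = (k : ℂ) :=
        mul_left_cancel₀ h2 (hk.trans (by ring))
      have hmc : (m : ℂ) = (k : ℂ) * (q : ℂ) := (div_eq_iff hq0).mp hmq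
      have hmz : (m : ℤ) = k * (q : ℤ) := by exact_mod_cast hmc
      exact h (Int.natCast_dvd_natCast.mp ⟨k, by rw [hmz, mul_comm]⟩)
    rw [geom_sum_eq hx1, hxq]
    simp

/-- The divisor-indicator function `f(d) = d·[d ∣ n]`. -/
noncomputable def rf (n : ℕ) : ℕ → ℂ := fun d => if d ∣ n then (d : ℂ) else 0

lemma sum_moebius_divisors (g : ℕ) :
    (∑ d ∈ g.divisors, μ d) = if g = 1 then 1 else 0 := by
  rcases eq_or_ne g 0 with rfl | hg
  · simp
  have h := ArithmeticFunction.ext_iff.mp ArithmeticFunction.moebius_mul_coe_zeta g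
  rw [ArithmeticFunction.mul_apply, ArithmeticFunction.one_apply] at h
  rw [← h, Nat.sum_divisorsAntidiagonal
    (f := fun x y => μ x * ((ζ : ArithmeticFunction ℕ) : ArithmeticFunction ℤ) y)]
  refine (Finset.sum_congr rfl fun d hd => ?_)
  obtain ⟨hdvd, -⟩ := Nat.mem_divisors.mp hd
  have hne : g / d ≠ 0 := by
    intro h0
    exact hg (by simpa [h0] using (Nat.div_mul_cancel hdvd).symm)
  simp [ArithmeticFunction.natCoe_apply, ArithmeticFunction.zeta_apply, hne]

lemma moebius_indicator (a q : ℕ) (hq : q ≠ 0) :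
    ∑ d ∈ q.divisors, (if d ∣ a then ((μ d : ℤ) : ℂ) else 0)
      = if Nat.Coprime a q then 1 else 0 := by
  have h1 : q.divisors.filter (· ∣ a) = (Nat.gcd a q).divisors := by
    ext d
    simp only [Finset.mem_filter, Nat.mem_divisors, Nat.dvd_gcd_iff]
    constructor
    · rintro ⟨⟨h1, h2⟩, h3⟩
      exact ⟨⟨h3, h1⟩, fun h0 => hq (Nat.eq_zero_of_gcd_eq_zero_right h0)⟩
    · rintro ⟨⟨h1, h2⟩, h3⟩
      exact ⟨⟨h2, hq⟩, h1⟩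
  rw [← Finset.sum_filter, h1]
  have : (∑ d ∈ (Nat.gcd a q).divisors, ((μ d : ℤ) : ℂ))
      = ((∑ d ∈ (Nat.gcd a q).divisors, μ d : ℤ) : ℂ) := by push_cast; rfl
  rw [this, sum_moebius_divisors]
  unfold Nat.Coprime
  split_ifs with h' <;> simp

lemma ramanujanSum_eq_sum (n q : ℕ) (hq : q ≠ 0) :
    ramanujanSum q n = ∑ d ∈ q.divisors, ((μ d : ℤ) : ℂ) * rf n (q / d) := by
  have hq' : 0 < q := Nat.pos_of_ne_zero hq
  set E : ℕ → ℂ := fun a => Complex.exp (2 * Real.pi * Complex.I * (((n * a : ℕ) : ℂ) / (q : ℂ)))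
    with hE
  calc ramanujanSum q n
      = ∑ a ∈ Finset.range q, (if Nat.Coprime a q then (1 : ℂ) else 0) * E a := by
        rw [ramanujanSum, Finset.sum_filter]
        exact Finset.sum_congr rfl fun a _ => by split_ifs <;> simp [hE, Nat.cast_mul]
    _ = ∑ a ∈ Finset.range q,
          ∑ d ∈ q.divisors, (if d ∣ a then ((μ d : ℤ) : ℂ) else 0) * E a := by
        refine Finset.sum_congr rfl fun a _ => ?_
        rw [← Finset.sum_mul, moebius_indicator a q hq]
    _ = ∑ d ∈ q.divisors, ∑ a ∈ Finset.range q,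
          (if d ∣ a then ((μ d : ℤ) : ℂ) * E a else 0) := by
        rw [Finset.sum_comm]
        exact Finset.sum_congr rfl fun d _ => Finset.sum_congr rfl fun a _ => by
          split_ifs <;> simp
    _ = ∑ d ∈ q.divisors, ((μ d : ℤ) : ℂ) * rf n (q / d) := by
        refine Finset.sum_congr rfl fun d hd => ?_
        obtain ⟨hdvd, -⟩ := Nat.mem_divisors.mp hd
        have hd0 : 0 < d := Nat.pos_of_ne_zero fun h0 => hq (by simpa [h0] using hdvd)
        set m := q / d with hm
        have hdm : d * m = q := Nat.mul_div_cancel' hdvd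
        have hm0 : 0 < m := by
          rcases Nat.eq_zero_or_pos m with h0 | h0
          · exact absurd (by simpa [h0] using hdm.symm) hq
          · exact h0
        have key : ∑ a ∈ (Finset.range q).filter (d ∣ ·), E a
            = ∑ b ∈ Finset.range m,
                Complex.exp (2 * Real.pi * Complex.I * (((n * b : ℕ) : ℂ) / (m : ℂ))) := by
          refine Finset.sum_nbij' (i := fun a => a / d) (j := fun b => d * b) ?_ ?_ ?_ ?_ ?_
          · intro a ha
            obtain ⟨ha1, ha2⟩ := Finset.mem_filter.mp ha
            rw [Finset.mem_range] at ha1 ⊢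
            exact Nat.div_lt_of_lt_mul (by omega)
          · intro b hb
            rw [Finset.mem_range] at hb
            refine Finset.mem_filter.mpr ⟨Finset.mem_range.mpr ?_, Dvd.intro b rfl⟩
            calc d * b < d * m := by exact Nat.mul_lt_mul_of_le_of_lt (le_refl d) hb hd0
              _ = q := hdm
          · intro a ha
            exact Nat.mul_div_cancel' (Finset.mem_filter.mp ha).2
          · intro b hb
            exact Nat.mul_div_cancel_left b hd0
          · intro a ha
            obtain ⟨c, rfl⟩ := (Finset.mem_filter.mp ha).2
            simp only [hE, Nat.mul_div_cancel_left c hd0]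
            congr 1
            have hdc : (d : ℂ) ≠ 0 := Nat.cast_ne_zero.mpr hd0.ne'
            have hmc : (m : ℂ) ≠ 0 := Nat.cast_ne_zero.mpr hm0.ne'
            have hqc : (q : ℂ) = (d : ℂ) * (m : ℂ) := by
              rw [← hdm]; push_cast; ring
            rw [hqc]
            push_cast
            field_simp
        rw [← Finset.sum_filter, ← Finset.mul_sum, key, sum_exp_eq m n hm0]
        simp [rf]

lemma ramanujanSum_eq_conv (n q : ℕ) :
    ramanujanSum q n = (↗μ ⍟ rf n) q := by
  rcases eq_or_ne q 0 with rfl | hq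
  · simp [ramanujanSum]
  simp only [LSeries.convolution_def]
  rw [ramanujanSum_eq_sum n q hq,
    Nat.sum_divisorsAntidiagonal (f := fun x y => ((μ x : ℤ) : ℂ) * rf n y)]

lemma rf_term_eq_zero (n : ℕ) (hn : 0 < n) (s : ℂ) :
    ∀ q ∉ n.divisors, LSeries.term (rf n) s q = 0 := by
  intro q hq
  rcases eq_or_ne q 0 with rfl | hq0
  · exact LSeries.term_zero ..
  · rw [LSeries.term_of_ne_zero hq0]
    have : ¬ q ∣ n := fun h => hq (Nat.mem_divisors.mpr ⟨h, hn.ne'⟩)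
    simp [rf, this]

lemma rf_summable (n : ℕ) (hn : 0 < n) (s : ℂ) : LSeriesSummable (rf n) s :=
  summable_of_ne_finset_zero (rf_term_eq_zero n hn s)

lemma rf_LSeries (n : ℕ) (hn : 0 < n) (s : ℂ) : LSeries (rf n) s = sigmaC (1 - s) n := by
  rw [LSeries, tsum_eq_sum (rf_term_eq_zero n hn s), sigmaC]
  refine Finset.sum_congr rfl fun d hd => ?_
  obtain ⟨hdvd, hn0⟩ := Nat.mem_divisors.mp hd
  have hd0 : d ≠ 0 := fun h0 => hn.ne' (by simpa [h0] using hdvd)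
  have hdc : (d : ℂ) ≠ 0 := Nat.cast_ne_zero.mpr hd0
  rw [LSeries.term_of_ne_zero hd0, sub_eq_add_neg, Complex.cpow_add _ _ hdc,
    Complex.cpow_one, Complex.cpow_neg, rf, div_eq_mul_inv]
  simp [hdvd]

lemma ramanujan_norm_le (n : ℕ) (hn : 0 < n) (q : ℕ) (hq : q ≠ 0) :
    ‖ramanujanSum q n‖ ≤ ∑ d ∈ n.divisors, (d : ℝ) := by
  rw [ramanujanSum_eq_sum n q hq]
  calc ‖∑ d ∈ q.divisors, ((μ d : ℤ) : ℂ) * rf n (q / d)‖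
      ≤ ∑ d ∈ q.divisors, ‖((μ d : ℤ) : ℂ) * rf n (q / d)‖ := norm_sum_le _ _
    _ ≤ ∑ d ∈ q.divisors, ‖rf n (q / d)‖ := by
        refine Finset.sum_le_sum fun d _ => ?_
        rw [norm_mul]
        have h1 : ‖((μ d : ℤ) : ℂ)‖ ≤ 1 := by
          rw [show ((μ d : ℤ) : ℂ) = ((μ d : ℝ) : ℂ) by push_cast; rfl, Complex.norm_real,
            Real.norm_eq_abs]
          exact_mod_cast ArithmeticFunction.abs_moebius_le_one (n := d)
        calc ‖((μ d : ℤ) : ℂ)‖ * ‖rf n (q / d)‖ ≤ 1 * ‖rf n (q / d)‖ :=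
              mul_le_mul_of_nonneg_right h1 (norm_nonneg _)
          _ = ‖rf n (q / d)‖ := one_mul _
    _ = ∑ d ∈ q.divisors, ‖rf n d‖ := Nat.sum_div_divisors q fun d => ‖rf n d‖
    _ = ∑ d ∈ q.divisors.filter (· ∣ n), (d : ℝ) := by
        rw [Finset.sum_filter]
        refine Finset.sum_congr rfl fun d _ => ?_
        simp only [rf]
        split_ifs with h <;> simp
    _ ≤ ∑ d ∈ n.divisors, (d : ℝ) := by
        refine Finset.sum_le_sum_of_subset_of_nonneg ?_ (fun d _ _ => by positivity)
        intro d hd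
        obtain ⟨hd1, hd2⟩ := Finset.mem_filter.mp hd
        exact Nat.mem_divisors.mpr ⟨hd2, hn.ne'⟩

/-- Ramanujan's identity `∑_q c_q(n) q^{-s} = σ_{1-s}(n)/ζ(s)` for `Re s > 1`,
with absolute convergence. -/
theorem ramanujan_identity (n : ℕ) (hn : 0 < n) (s : ℂ) (hs : 1 < s.re) :
    Summable (fun q : ℕ+ => ‖ramanujanSum q n * ((q : ℕ) : ℂ) ^ (-s)‖) ∧
    ∑' q : ℕ+, ramanujanSum q n * ((q : ℕ) : ℂ) ^ (-s) = sigmaC (1 - s) n / riemannZeta s := by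
  set C : ℝ := ∑ d ∈ n.divisors, (d : ℝ) with hC
  have hmaj : Summable (fun q : ℕ+ => C * ((q : ℕ) : ℝ) ^ (-s.re)) := by
    have h1 : Summable (fun q : ℕ => ((q : ℝ) ^ s.re)⁻¹) := Real.summable_nat_rpow_inv.mpr hs
    have h2 := (h1.mul_left C).comp_injective
      (fun (a b : ℕ+) h => PNat.coe_injective h : Function.Injective (fun q : ℕ+ => (q : ℕ)))
    refine h2.congr fun q => ?_
    rw [Function.comp_apply, Real.rpow_neg (by positivity)]
  have hnorm : Summable (fun q : ℕ+ => ‖ramanujanSum q n * ((q : ℕ) : ℂ) ^ (-s)‖) := by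
    refine Summable.of_nonneg_of_le (fun q => norm_nonneg _) (fun q => ?_) hmaj
    rw [norm_mul, Complex.norm_natCast_cpow_of_pos q.pos, Complex.neg_re]
    exact mul_le_mul_of_nonneg_right (ramanujan_norm_le n hn q q.pos.ne')
      (Real.rpow_nonneg (by positivity) _)
  refine ⟨hnorm, ?_⟩
  have hμ : LSeriesSummable ↗μ s := ArithmeticFunction.LSeriesSummable_moebius_iff.mpr hs
  have hf : LSeriesSummable (rf n) s := rf_summable n hn s
  have hg : LSeriesSummable (↗μ ⍟ rf n) s := hμ.convolution hf
  have hval : LSeries (↗μ ⍟ rf n) s = sigmaC (1 - s) n / riemannZeta s := by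
    rw [LSeries_convolution' hμ hf, rf_LSeries n hn s]
    have hz := ArithmeticFunction.LSeries_zeta_mul_Lseries_moebius hs
    rw [ArithmeticFunction.LSeries_zeta_eq_riemannZeta hs] at hz
    have hzne := riemannZeta_ne_zero_of_one_lt_re hs
    field_simp
    linear_combination sigmaC (1 - s) n * hz
  have hrange : ∀ x : ℕ, x ∉ Set.range (fun q : ℕ+ => (q : ℕ)) →
      LSeries.term (↗μ ⍟ rf n) s x = 0 := by
    intro x hx
    have hx0 : x = 0 := by
      by_contra h0
      exact hx ⟨⟨x, Nat.pos_of_ne_zero h0⟩, rfl⟩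
    simp [hx0]
  have hsum : HasSum (fun q : ℕ+ => LSeries.term (↗μ ⍟ rf n) s (q : ℕ))
      (LSeries (↗μ ⍟ rf n) s) :=
    (Function.Injective.hasSum_iff
      (fun (a b : ℕ+) h => PNat.coe_injective h) hrange).mpr hg.hasSum
  have hterm : (fun q : ℕ+ => LSeries.term (↗μ ⍟ rf n) s (q : ℕ))
      = fun q : ℕ+ => ramanujanSum q n * ((q : ℕ) : ℂ) ^ (-s) := by
    funext q
    rw [LSeries.term_of_ne_zero q.pos.ne', ← ramanujanSum_eq_conv n q,
      Complex.cpow_neg, div_eq_mul_inv]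
  rw [← hval]
  exact (hterm ▸ hsum).tsum_eq
end

section
/- Let s₁, s₂, s₃ be complex numbers with Re(s₃) > max{1, 2 − Re(s₁), 2 − Re(s₂), 3 − Re(s₁ + s₂)}. Then ∑_{n=1}^∞ σ_{1−s₁}(n) σ_{1−s₂}(n) n^{−s₃} = ζ(s₃) ζ(s₃+s₁−1) ζ(s₃+s₂−1) ζ(s₃+s₁+s₂−2) / ζ(2s₃+s₁+s₂−2), where the series converges absolutely. -/
open Complex Filter

/- ### Auxiliary development -/

namespace SigmaProdAux

open ArithmeticFunction Finset LSeries.notation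
open scoped ArithmeticFunction.zeta ArithmeticFunction.Moebius

/-- The arithmetic function `n ↦ n^z` (with value `0` at `0`). -/
noncomputable def powA (z : ℂ) : ArithmeticFunction ℂ :=
  ⟨fun n => if n = 0 then 0 else (n : ℂ) ^ z, if_pos rfl⟩

lemma powA_apply {z : ℂ} {n : ℕ} (hn : n ≠ 0) : powA z n = (n : ℂ) ^ z := if_neg hn

lemma natCast_pow_cpow (m i : ℕ) (z : ℂ) : ((m ^ i : ℕ) : ℂ) ^ z = ((m : ℂ) ^ z) ^ i := by
  push_cast
  rw [← Complex.natCast_cpow_natCast_mul, Complex.cpow_nat_mul]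

lemma powA_mult (z : ℂ) : (powA z).IsMultiplicative := by
  refine ⟨by simp [powA_apply one_ne_zero], fun {m n} hmn => ?_⟩
  rcases eq_or_ne m 0 with rfl | hm
  · rcases (Nat.coprime_zero_left n).mp hmn with rfl
    simp [powA_apply one_ne_zero, powA, ArithmeticFunction.map_zero]
  rcases eq_or_ne n 0 with rfl | hn
  · rcases (Nat.coprime_zero_right m).mp hmn with rfl
    simp [powA_apply one_ne_zero, powA, ArithmeticFunction.map_zero]
  rw [powA_apply (Nat.mul_ne_zero hm hn), powA_apply hm, powA_apply hn]
  push_cast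
  exact Complex.natCast_mul_natCast_cpow m n z

lemma coe_zeta_mul_powA_apply {z : ℂ} {n : ℕ} :
    ((↑ζ * powA z : ArithmeticFunction ℂ)) n = sigmaC z n := by
  rw [coe_zeta_mul_apply, sigmaC]
  exact Finset.sum_congr rfl fun d hd => powA_apply (Nat.pos_of_mem_divisors hd).ne'

/-- The arithmetic function supported on squares, `m² ↦ μ(m) m^c`. -/
noncomputable def hA (c : ℂ) : ArithmeticFunction ℂ :=
  ⟨fun n => if n.sqrt * n.sqrt = n then ((μ n.sqrt : ℤ) : ℂ) * (n.sqrt : ℂ) ^ c else 0, by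
    simp⟩

lemma hA_apply_sq (c : ℂ) (m : ℕ) : hA c (m * m) = ((μ m : ℤ) : ℂ) * (m : ℂ) ^ c := by
  show (if (m*m).sqrt * (m*m).sqrt = m*m then ((μ (m*m).sqrt : ℤ) : ℂ) * ((m*m).sqrt : ℂ) ^ c
    else 0) = _
  rw [Nat.sqrt_eq, if_pos rfl]

lemma hA_apply_not_sq {c : ℂ} {n : ℕ} (h : ¬ IsSquare n) : hA c n = 0 := by
  show (if n.sqrt * n.sqrt = n then ((μ n.sqrt : ℤ) : ℂ) * (n.sqrt : ℂ) ^ c else 0) = 0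
  rw [if_neg fun hc => h ⟨n.sqrt, hc.symm⟩]

lemma hA_mult (c : ℂ) : (hA c).IsMultiplicative := by
  constructor
  · have : (1 : ℕ) = 1 * 1 := rfl
    rw [this, hA_apply_sq]
    simp
  · intro m n hmn
    by_cases hm : IsSquare m
    · by_cases hn : IsSquare n
      · obtain ⟨u, rfl⟩ := hm
        obtain ⟨v, rfl⟩ := hn
        have huv : u.Coprime v :=
          Nat.Coprime.coprime_dvd_left (Dvd.intro u rfl)
            (hmn.coprime_dvd_right (Dvd.intro v rfl))
        have he : u * u * (v * v) = (u * v) * (u * v) := by ring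
        rw [he, hA_apply_sq, hA_apply_sq, hA_apply_sq]
        rw [isMultiplicative_moebius.2 huv]
        push_cast
        rw [Complex.natCast_mul_natCast_cpow]
        ring
      · rw [hA_apply_not_sq hn, mul_zero, hA_apply_not_sq]
        rintro ⟨t, ht⟩
        apply hn
        have h' : n * m = t ^ 2 := by rw [sq, ← ht]; ring
        obtain ⟨d, hd⟩ := exists_eq_pow_of_mul_eq_pow
          (show IsUnit (gcd n m) by
            rw [Nat.isUnit_iff]; exact Nat.Coprime.gcd_eq_one hmn.symm) h'
        exact ⟨d, by rw [hd, sq]⟩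
    · rw [hA_apply_not_sq hm, zero_mul, hA_apply_not_sq]
      rintro ⟨t, ht⟩
      apply hm
      have h' : m * n = t ^ 2 := by rw [sq, ← ht]
      obtain ⟨d, hd⟩ := exists_eq_pow_of_mul_eq_pow
        (show IsUnit (gcd m n) by
          rw [Nat.isUnit_iff]; exact Nat.Coprime.gcd_eq_one hmn) h'
      exact ⟨d, by rw [hd, sq]⟩

/-- Dirichlet convolution evaluated at a prime power. -/
lemma mul_apply_prime_pow {f g : ArithmeticFunction ℂ} {p : ℕ} (hp : p.Prime) (k : ℕ) :
    (f * g) (p ^ k) = ∑ i ∈ range (k + 1), f (p ^ i) * g (p ^ (k - i)) := by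
  rw [mul_apply, Nat.sum_divisorsAntidiagonal (f · * g ·), Nat.sum_divisors_prime_pow hp]
  refine Finset.sum_congr rfl fun i hi => ?_
  rw [Nat.pow_div (Nat.lt_succ_iff.mp (mem_range.mp hi)) hp.pos]

lemma zeta_pp {p : ℕ} (hp : p.Prime) (i : ℕ) :
    ((↑ζ : ArithmeticFunction ℂ)) (p ^ i) = 1 := by
  simp [natCoe_apply, pow_ne_zero i hp.pos.ne', hp.ne_zero]

lemma powA_pp {p : ℕ} (hp : p.Prime) (z : ℂ) (i : ℕ) :
    powA z (p ^ i) = ((p : ℂ) ^ z) ^ i := by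
  rw [powA_apply (pow_ne_zero i hp.pos.ne'), natCast_pow_cpow]

lemma conv_succ (u : ℕ → ℂ) (c : ℂ) (k : ℕ) :
    ∑ i ∈ range (k + 2), u i * c ^ (k + 1 - i) =
      u (k + 1) + c * ∑ i ∈ range (k + 1), u i * c ^ (k - i) := by
  rw [Finset.sum_range_succ]
  have h1 : ∀ i ∈ range (k + 1), u i * c ^ (k + 1 - i) = c * (u i * c ^ (k - i)) := by
    intro i hi
    have hik : i ≤ k := Nat.lt_succ_iff.mp (mem_range.mp hi)
    have : k + 1 - i = (k - i) + 1 := by omega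
    rw [this, pow_succ]
    ring
  rw [Finset.sum_congr rfl h1, ← Finset.mul_sum, Nat.sub_self, pow_zero, mul_one]
  ring

lemma conv_powA_succ (f : ArithmeticFunction ℂ) {p : ℕ} (hp : p.Prime) (z : ℂ) (k : ℕ) :
    (f * powA z) (p ^ (k + 1)) = f (p ^ (k + 1)) + (p : ℂ) ^ z * (f * powA z) (p ^ k) := by
  rw [mul_apply_prime_pow hp (k + 1), mul_apply_prime_pow hp k]
  simp_rw [powA_pp hp z]
  exact conv_succ (fun i => f (p ^ i)) _ k

/-- The key algebraic recursion. -/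
lemma seq_claim (X Y : ℂ) (S T B G : ℕ → ℂ)
    (hS0 : S 0 = 1) (hT0 : T 0 = 1) (hB0 : B 0 = 1) (hG0 : G 0 = 1)
    (hS : ∀ k, S (k + 1) = 1 + X * S k)
    (hT : ∀ k, T (k + 1) = 1 + Y * T k)
    (hB : ∀ k, B (k + 1) = S (k + 1) + Y * B k)
    (hB' : ∀ k, B (k + 1) = T (k + 1) + X * B k)
    (hG : ∀ k, G (k + 1) = B (k + 1) + (X * Y) * G k) :
    ∀ k, G (k + 2) = S (k + 2) * T (k + 2) + (X * Y) * G k := by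
  intro k
  induction k with
  | zero =>
    have e1 : G 2 = B 2 + (X * Y) * G 1 := hG 1
    have e2 : G 1 = B 1 + (X * Y) * G 0 := hG 0
    have e3 : B 2 = S 2 + Y * B 1 := hB 1
    have e4 : B 1 = T 1 + X * B 0 := hB' 0
    have e5 : S 2 = 1 + X * S 1 := hS 1
    have e6 : S 1 = 1 + X * S 0 := hS 0
    have e7 : T 2 = 1 + Y * T 1 := hT 1
    have e8 : T 1 = 1 + Y * T 0 := hT 0
    rw [e1, e2, e3, e4, e5, e7, e8, e6, hS0, hT0, hB0, hG0]
    ring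
  | succ k ih =>
    have e1 : G (k + 3) = B (k + 3) + (X * Y) * G (k + 2) := hG (k + 2)
    have e2 : B (k + 3) = S (k + 3) + Y * B (k + 2) := hB (k + 2)
    have e3 : B (k + 2) = T (k + 2) + X * B (k + 1) := hB' (k + 1)
    have e4 : G (k + 1) = B (k + 1) + (X * Y) * G k := hG k
    have e5 : S (k + 3) = 1 + X * S (k + 2) := hS (k + 2)
    have e6 : T (k + 3) = 1 + Y * T (k + 2) := hT (k + 2)
    show G (k + 3) = S (k + 3) * T (k + 3) + (X * Y) * G (k + 1)
    rw [e1, ih, e2, e3, e4, e5, e6]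
    ring

lemma hA_pp (c : ℂ) {p : ℕ} (hp : p.Prime) (j : ℕ) :
    hA c (p ^ j) = if j = 0 then 1 else if j = 2 then -((p : ℂ) ^ c) else 0 := by
  rcases Nat.even_or_odd j with ⟨m, hm⟩ | hodd
  · have hpe : p ^ j = (p ^ m) * (p ^ m) := by rw [hm, pow_add]
    rw [hpe, hA_apply_sq]
    rcases m with _ | _ | m
    · have : j = 0 := by omega
      subst this
      simp
    · have : j = 2 := by omega
      subst this
      rw [pow_one, moebius_apply_prime hp]
      norm_num
    · have h0 : j ≠ 0 := by omega
      have h2 : j ≠ 2 := by omega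
      rw [if_neg h0, if_neg h2, moebius_apply_prime_pow hp (by omega), if_neg (by omega)]
      simp
  · have hns : ¬ IsSquare (p ^ j) := by
      rintro ⟨t, ht⟩
      have htd : t ∣ p ^ j := Dvd.intro t ht.symm
      obtain ⟨i, hi, rfl⟩ := (Nat.dvd_prime_pow hp).mp htd
      have : j = i + i := Nat.pow_right_injective hp.two_le (by show p ^ j = p ^ (i + i); rw [pow_add]; exact ht)
      obtain ⟨m', hm'⟩ := hodd
      omega
    obtain ⟨m', hm'⟩ := hodd
    rw [hA_apply_not_sq hns, if_neg (by omega), if_neg (by omega)]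

/-- The main identity of arithmetic functions:
`σ_a · σ_b = (1 ⋆ n^a ⋆ n^b ⋆ n^{a+b}) ⋆ h_{a+b}`. -/
theorem sigma_mul_sigma_eq (a b : ℂ) :
    ((↑ζ * powA a : ArithmeticFunction ℂ).pmul (↑ζ * powA b))
      = (↑ζ * powA a * powA b * powA (a + b)) * hA (a + b) := by
  have hζm : ((↑ζ : ArithmeticFunction ℂ)).IsMultiplicative := isMultiplicative_zeta.natCast
  refine (IsMultiplicative.eq_iff_eq_on_prime_powers _
    ((hζm.mul (powA_mult a)).pmul (hζm.mul (powA_mult b))) _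
    ((((hζm.mul (powA_mult a)).mul (powA_mult b)).mul (powA_mult (a + b))).mul
      (hA_mult (a + b)))).mpr ?_
  intro p k hp
  have hp0 : (p : ℂ) ≠ 0 := Nat.cast_ne_zero.mpr hp.pos.ne'
  have hXY : (p : ℂ) ^ (a + b) = (p : ℂ) ^ a * (p : ℂ) ^ b := Complex.cpow_add _ _ hp0
  -- the sequences
  have hS0 : (↑ζ * powA a : ArithmeticFunction ℂ) (p ^ 0) = 1 := by
    rw [pow_zero]; exact (hζm.mul (powA_mult a)).1
  have hT0 : (↑ζ * powA b : ArithmeticFunction ℂ) (p ^ 0) = 1 := by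
    rw [pow_zero]; exact (hζm.mul (powA_mult b)).1
  have hB0 : (↑ζ * powA a * powA b : ArithmeticFunction ℂ) (p ^ 0) = 1 := by
    rw [pow_zero]; exact ((hζm.mul (powA_mult a)).mul (powA_mult b)).1
  have hG0 : (↑ζ * powA a * powA b * powA (a + b) : ArithmeticFunction ℂ) (p ^ 0) = 1 := by
    rw [pow_zero]; exact (((hζm.mul (powA_mult a)).mul (powA_mult b)).mul (powA_mult (a + b))).1
  have hS : ∀ k, (↑ζ * powA a : ArithmeticFunction ℂ) (p ^ (k + 1))
      = 1 + (p : ℂ) ^ a * (↑ζ * powA a : ArithmeticFunction ℂ) (p ^ k) := by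
    intro k
    rw [conv_powA_succ _ hp a k, zeta_pp hp]
  have hT : ∀ k, (↑ζ * powA b : ArithmeticFunction ℂ) (p ^ (k + 1))
      = 1 + (p : ℂ) ^ b * (↑ζ * powA b : ArithmeticFunction ℂ) (p ^ k) := by
    intro k
    rw [conv_powA_succ _ hp b k, zeta_pp hp]
  have hB : ∀ k, (↑ζ * powA a * powA b : ArithmeticFunction ℂ) (p ^ (k + 1))
      = (↑ζ * powA a : ArithmeticFunction ℂ) (p ^ (k + 1))
        + (p : ℂ) ^ b * (↑ζ * powA a * powA b : ArithmeticFunction ℂ) (p ^ k) :=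
    fun k => conv_powA_succ _ hp b k
  have hcomm : (↑ζ * powA a * powA b : ArithmeticFunction ℂ) = ↑ζ * powA b * powA a :=
    mul_right_comm _ _ _
  have hB' : ∀ k, (↑ζ * powA a * powA b : ArithmeticFunction ℂ) (p ^ (k + 1))
      = (↑ζ * powA b : ArithmeticFunction ℂ) (p ^ (k + 1))
        + (p : ℂ) ^ a * (↑ζ * powA a * powA b : ArithmeticFunction ℂ) (p ^ k) := by
    intro k
    rw [hcomm]
    exact conv_powA_succ _ hp a k
  have hG : ∀ k, (↑ζ * powA a * powA b * powA (a + b) : ArithmeticFunction ℂ) (p ^ (k + 1))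
      = (↑ζ * powA a * powA b : ArithmeticFunction ℂ) (p ^ (k + 1))
        + ((p : ℂ) ^ a * (p : ℂ) ^ b)
          * (↑ζ * powA a * powA b * powA (a + b) : ArithmeticFunction ℂ) (p ^ k) := by
    intro k
    rw [conv_powA_succ _ hp (a + b) k, hXY]
  have claim : ∀ k, (↑ζ * powA a * powA b * powA (a + b) : ArithmeticFunction ℂ) (p ^ (k + 2))
      = (↑ζ * powA a : ArithmeticFunction ℂ) (p ^ (k + 2))
          * (↑ζ * powA b : ArithmeticFunction ℂ) (p ^ (k + 2))
        + ((p : ℂ) ^ a * (p : ℂ) ^ b)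
          * (↑ζ * powA a * powA b * powA (a + b) : ArithmeticFunction ℂ) (p ^ k) :=
    seq_claim ((p : ℂ) ^ a) ((p : ℂ) ^ b)
      (fun n => (↑ζ * powA a : ArithmeticFunction ℂ) (p ^ n))
      (fun n => (↑ζ * powA b : ArithmeticFunction ℂ) (p ^ n))
      (fun n => (↑ζ * powA a * powA b : ArithmeticFunction ℂ) (p ^ n))
      (fun n => (↑ζ * powA a * powA b * powA (a + b) : ArithmeticFunction ℂ) (p ^ n))
      hS0 hT0 hB0 hG0 hS hT hB hB' hG
  rw [pmul_apply]
  rcases k with _ | _ | m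
  · -- k = 0
    conv_rhs => rw [mul_apply_prime_pow hp 0]
    rw [Finset.sum_range_one, hA_pp _ hp 0, if_pos rfl, hG0, hS0, hT0]
  · -- k = 1
    conv_rhs => rw [mul_apply_prime_pow hp 1]
    rw [Finset.sum_range_succ, Finset.sum_range_one]
    have e1 : 1 - 0 = 1 := rfl
    have e2 : 1 - 1 = 0 := rfl
    rw [e1, e2, hA_pp _ hp 1, hA_pp _ hp 0, if_neg one_ne_zero,
      if_neg (by norm_num : (1 : ℕ) ≠ 2), if_pos rfl]
    have g1 : (↑ζ * powA a * powA b * powA (a + b) : ArithmeticFunction ℂ) (p ^ 1)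
        = (↑ζ * powA a * powA b : ArithmeticFunction ℂ) (p ^ 1)
          + ((p : ℂ) ^ a * (p : ℂ) ^ b) * 1 := by rw [hG 0, hG0]
    have b1 : (↑ζ * powA a * powA b : ArithmeticFunction ℂ) (p ^ 1)
        = (↑ζ * powA a : ArithmeticFunction ℂ) (p ^ 1) + (p : ℂ) ^ b * 1 := by
      rw [hB 0, hB0]
    have s1 : (↑ζ * powA a : ArithmeticFunction ℂ) (p ^ 1) = 1 + (p : ℂ) ^ a * 1 := by
      rw [hS 0, hS0]
    have t1 : (↑ζ * powA b : ArithmeticFunction ℂ) (p ^ 1) = 1 + (p : ℂ) ^ b * 1 := by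
      rw [hT 0, hT0]
    rw [g1, b1, s1, t1]
    ring
  · -- k = m + 2
    conv_rhs => rw [mul_apply_prime_pow hp (m + 2)]
    rw [Finset.sum_range_succ, Finset.sum_range_succ]
    have e1 : m + 2 - (m + 1) = 1 := by omega
    have e2 : m + 2 - (m + 2) = 0 := by omega
    rw [e1, e2, hA_pp _ hp 1, hA_pp _ hp 0, if_neg one_ne_zero,
      if_neg (by norm_num : (1 : ℕ) ≠ 2), if_pos rfl]
    have e3 : ∑ i ∈ range (m + 1),
        (↑ζ * powA a * powA b * powA (a + b) : ArithmeticFunction ℂ) (p ^ i)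
          * hA (a + b) (p ^ (m + 2 - i))
        = (↑ζ * powA a * powA b * powA (a + b) : ArithmeticFunction ℂ) (p ^ m)
          * -((p : ℂ) ^ (a + b)) := by
      rw [Finset.sum_eq_single_of_mem m (self_mem_range_succ m)]
      · have h2 : m + 2 - m = 2 := by omega
        rw [h2, hA_pp _ hp 2, if_neg (by norm_num : (2 : ℕ) ≠ 0), if_pos rfl]
      · intro i hi hne
        have hi' : i < m + 1 := mem_range.mp hi
        rw [hA_pp _ hp]
        rw [if_neg (by omega), if_neg (by omega), mul_zero]
    rw [e3, hXY]
    linear_combination (-1 : ℂ) * claim m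

/- ### The L-series computations -/

lemma powA_LSeries {z s : ℂ} (hs : 1 < (s - z).re) :
    LSeriesSummable ↗(powA z) s ∧ LSeries ↗(powA z) s = riemannZeta (s - z) := by
  have hterm : ∀ n : ℕ, LSeries.term ↗(powA z) s n = LSeries.term 1 (s - z) n := by
    intro n
    rcases eq_or_ne n 0 with rfl | hn
    · rw [LSeries.term_zero, LSeries.term_zero]
    · rw [LSeries.term_of_ne_zero hn, LSeries.term_of_ne_zero hn]
      have hn0 : (n : ℂ) ≠ 0 := Nat.cast_ne_zero.mpr hn
      rw [powA_apply hn, Pi.one_apply, Complex.cpow_sub _ _ hn0, one_div_div]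
  have hfun : LSeries.term ↗(powA z) s = LSeries.term 1 (s - z) := funext hterm
  constructor
  · show Summable (LSeries.term ↗(powA z) s)
    rw [hfun]
    exact LSeriesSummable_one_iff.mpr hs
  · have h1 : LSeries ↗(powA z) s = LSeries 1 (s - z) := tsum_congr hterm
    rw [h1, LSeries_one_eq_riemannZeta hs]

lemma hA_LSeries {c s : ℂ} (hs : 1 < (2 * s - c).re) :
    LSeriesSummable ↗(hA c) s ∧ LSeries ↗(hA c) s = (riemannZeta (2 * s - c))⁻¹ := by
  have hinj : Function.Injective (fun m : ℕ => m ^ 2) :=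
    Nat.pow_left_injective two_ne_zero
  have hsupp : ∀ n ∉ Set.range (fun m : ℕ => m ^ 2), LSeries.term ↗(hA c) s n = 0 := by
    intro n hn
    have h0 : n ≠ 0 := fun h => hn ⟨0, by simp [h]⟩
    rw [LSeries.term_of_ne_zero h0]
    rw [show hA c n = 0 from hA_apply_not_sq fun ⟨t, ht⟩ => hn ⟨t, by show t ^ 2 = n; rw [sq]; exact ht.symm⟩]
    simp
  have hterm : ∀ m : ℕ, LSeries.term ↗(hA c) s (m ^ 2) = LSeries.term ↗μ (2 * s - c) m := by
    intro m
    rcases eq_or_ne m 0 with rfl | hm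
    · rw [show (0 : ℕ) ^ 2 = 0 by norm_num, LSeries.term_zero, LSeries.term_zero]
    · have hm2 : m ^ 2 ≠ 0 := pow_ne_zero _ hm
      rw [LSeries.term_of_ne_zero hm2, LSeries.term_of_ne_zero hm]
      have hv : hA c (m ^ 2) = ((μ m : ℤ) : ℂ) * (m : ℂ) ^ c := by
        rw [sq]; exact hA_apply_sq c m
      rw [hv]
      have hm0 : (m : ℂ) ≠ 0 := Nat.cast_ne_zero.mpr hm
      have h2s : ((m ^ 2 : ℕ) : ℂ) ^ s = (m : ℂ) ^ (2 * s) := by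
        rw [natCast_pow_cpow, ← Complex.cpow_nat_mul]
        norm_num
      rw [h2s, Complex.cpow_sub _ _ hm0, div_div_eq_mul_div]
  have hμ : LSeriesSummable ↗μ (2 * s - c) := LSeriesSummable_moebius_iff.mpr hs
  constructor
  · refine (Function.Injective.summable_iff hinj hsupp).mp ?_
    exact (summable_congr hterm).mpr hμ
  · have ht : ∑' m : ℕ, LSeries.term ↗(hA c) s (m ^ 2) = ∑' n, LSeries.term ↗(hA c) s n :=
      hinj.tsum_eq (Function.support_subset_iff'.mpr hsupp)
    have hLeq : LSeries ↗(hA c) s = LSeries ↗μ (2 * s - c) := by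
      rw [LSeries, LSeries, ← ht]
      exact tsum_congr hterm
    rw [hLeq]
    have h1 := LSeries_zeta_mul_Lseries_moebius hs
    rw [LSeries_zeta_eq_riemannZeta hs] at h1
    have hz : riemannZeta (2 * s - c) ≠ 0 := riemannZeta_ne_zero_of_one_lt_re hs
    rw [inv_eq_one_div, eq_div_iff hz, mul_comm]
    exact h1

end SigmaProdAux

open SigmaProdAux ArithmeticFunction LSeries.notation ArithmeticFunction.zeta in
/-- The Dirichlet series of `σ_{1-s₁}(n) σ_{1-s₂}(n)` as a quotient of zeta values,
with absolute convergence. -/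
theorem sigma_product_dirichlet_series (s₁ s₂ s₃ : ℂ)
    (h : max (max 1 (2 - s₁.re)) (max (2 - s₂.re) (3 - (s₁.re + s₂.re))) < s₃.re) :
    Summable (fun n : ℕ+ => ‖sigmaC (1 - s₁) n * sigmaC (1 - s₂) n * ((n : ℕ) : ℂ) ^ (-s₃)‖) ∧
    ∑' n : ℕ+, sigmaC (1 - s₁) n * sigmaC (1 - s₂) n * ((n : ℕ) : ℂ) ^ (-s₃) =
      riemannZeta s₃ * riemannZeta (s₃ + s₁ - 1) * riemannZeta (s₃ + s₂ - 1) *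
        riemannZeta (s₃ + s₁ + s₂ - 2) / riemannZeta (2 * s₃ + s₁ + s₂ - 2) := by
  rw [max_lt_iff, max_lt_iff, max_lt_iff] at h
  obtain ⟨⟨h1, h2⟩, h3, h4⟩ := h
  set a := 1 - s₁ with ha
  set b := 1 - s₂ with hb
  have hra : 1 < (s₃ - a).re := by
    rw [ha]
    simp only [Complex.sub_re, Complex.one_re]
    linarith
  have hrb : 1 < (s₃ - b).re := by
    rw [hb]
    simp only [Complex.sub_re, Complex.one_re]
    linarith
  have hrab : 1 < (s₃ - (a + b)).re := by
    rw [ha, hb]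
    simp only [Complex.sub_re, Complex.add_re, Complex.one_re]
    linarith
  have hr2 : 1 < (2 * s₃ - (a + b)).re := by
    rw [ha, hb]
    have : (2 * s₃ - ((1 - s₁) + (1 - s₂))).re
        = 2 * s₃.re - (1 - s₁.re) - (1 - s₂.re) := by
      simp [Complex.sub_re, Complex.add_re, Complex.one_re, Complex.mul_re]
      ring
    rw [this]
    linarith
  -- summabilities
  have hζfun : ↗(↑ζ : ArithmeticFunction ℂ) = ↗ζ := funext fun n => natCoe_apply
  have hzs : LSeriesSummable ↗(↑ζ : ArithmeticFunction ℂ) s₃ := by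
    rw [hζfun]
    exact LSeriesSummable_zeta_iff.mpr h1
  have hpa := powA_LSeries hra
  have hpb := powA_LSeries hrb
  have hpab := powA_LSeries hrab
  have hhA := hA_LSeries (c := a + b) (s := s₃) hr2
  have hg1 : LSeriesSummable ↗(↑ζ * powA a : ArithmeticFunction ℂ) s₃ :=
    LSeriesSummable_mul hzs hpa.1
  have hg2 : LSeriesSummable ↗(↑ζ * powA a * powA b : ArithmeticFunction ℂ) s₃ :=
    LSeriesSummable_mul hg1 hpb.1
  have hg3 : LSeriesSummable ↗(↑ζ * powA a * powA b * powA (a + b) : ArithmeticFunction ℂ) s₃ :=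
    LSeriesSummable_mul hg2 hpab.1
  have hgh : LSeriesSummable
      ↗((↑ζ * powA a * powA b * powA (a + b)) * hA (a + b) : ArithmeticFunction ℂ) s₃ :=
    LSeriesSummable_mul hg3 hhA.1
  have hL : LSeries ↗((↑ζ * powA a * powA b * powA (a + b)) * hA (a + b) :
      ArithmeticFunction ℂ) s₃ =
      riemannZeta s₃ * riemannZeta (s₃ - a) * riemannZeta (s₃ - b)
        * riemannZeta (s₃ - (a + b)) * (riemannZeta (2 * s₃ - (a + b)))⁻¹ := by
    rw [LSeries_mul' hg3 hhA.1, LSeries_mul' hg2 hpab.1, LSeries_mul' hg1 hpb.1,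
      LSeries_mul' hzs hpa.1, hpa.2, hpb.2, hpab.2, hhA.2, hζfun,
      LSeries_zeta_eq_riemannZeta h1]
  -- the key identity
  have hkey := sigma_mul_sigma_eq a b
  have hFsummable : LSeriesSummable
      ↗((↑ζ * powA a : ArithmeticFunction ℂ).pmul (↑ζ * powA b)) s₃ := by
    rw [hkey]; exact hgh
  have hFL : LSeries ↗((↑ζ * powA a : ArithmeticFunction ℂ).pmul (↑ζ * powA b)) s₃ =
      riemannZeta s₃ * riemannZeta (s₃ - a) * riemannZeta (s₃ - b)
        * riemannZeta (s₃ - (a + b)) * (riemannZeta (2 * s₃ - (a + b)))⁻¹ := by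
    rw [hkey]; exact hL
  -- bridge to ℕ+
  have hinj : Function.Injective (fun n : ℕ+ => (n : ℕ)) := fun m n hmn => PNat.coe_injective hmn
  set F : ℕ → ℂ := ↗((↑ζ * powA a : ArithmeticFunction ℂ).pmul (↑ζ * powA b)) with hF
  have hcomp : ∀ n : ℕ+, LSeries.term F s₃ (n : ℕ)
      = sigmaC a (n : ℕ) * sigmaC b (n : ℕ) * ((n : ℕ) : ℂ) ^ (-s₃) := by
    intro n
    rw [LSeries.term_of_ne_zero n.pos.ne']
    rw [div_eq_mul_inv, ← Complex.cpow_neg]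
    congr 1
    show ((↑ζ * powA a : ArithmeticFunction ℂ).pmul (↑ζ * powA b)) (n : ℕ) = _
    rw [pmul_apply, coe_zeta_mul_powA_apply, coe_zeta_mul_powA_apply]
  have hsupp : ∀ n ∉ Set.range (fun m : ℕ+ => (m : ℕ)), LSeries.term F s₃ n = 0 := by
    intro n hn
    have : n = 0 := by
      by_contra h0
      exact hn ⟨⟨n, Nat.pos_of_ne_zero h0⟩, rfl⟩
    rw [this, LSeries.term_zero]
  constructor
  · have hnorm : Summable (fun n : ℕ => ‖LSeries.term F s₃ n‖) := hFsummable.norm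
    refine (hnorm.comp_injective hinj).congr fun n => ?_
    rw [Function.comp_apply, hcomp n]
  · calc ∑' n : ℕ+, sigmaC a (n : ℕ) * sigmaC b (n : ℕ) * ((n : ℕ) : ℂ) ^ (-s₃)
        = ∑' n : ℕ+, LSeries.term F s₃ (n : ℕ) := tsum_congr fun n => (hcomp n).symm
      _ = ∑' n : ℕ, LSeries.term F s₃ n :=
          hinj.tsum_eq (Function.support_subset_iff'.mpr hsupp)
      _ = LSeries F s₃ := rfl
      _ = riemannZeta s₃ * riemannZeta (s₃ - a) * riemannZeta (s₃ - b)
            * riemannZeta (s₃ - (a + b)) * (riemannZeta (2 * s₃ - (a + b)))⁻¹ := hFL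
      _ = riemannZeta s₃ * riemannZeta (s₃ + s₁ - 1) * riemannZeta (s₃ + s₂ - 1) *
            riemannZeta (s₃ + s₁ + s₂ - 2) / riemannZeta (2 * s₃ + s₁ + s₂ - 2) := by
          rw [ha, hb]
          rw [show s₃ - (1 - s₁) = s₃ + s₁ - 1 by ring,
            show s₃ - (1 - s₂) = s₃ + s₂ - 1 by ring,
            show s₃ - ((1 - s₁) + (1 - s₂)) = s₃ + s₁ + s₂ - 2 by ring,
            show 2 * s₃ - ((1 - s₁) + (1 - s₂)) = 2 * s₃ + s₁ + s₂ - 2 by ring,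
            div_eq_mul_inv]
end
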